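/- Let T be a positive natural number, x : ZMod T → (Fin 3 → ℝ) a tri-axial signal, R a 3×3 real orthogonal matrix, λ > 0 a real gain, t ∈ ZMod T a circular shift, and r ∈ ZMod T a frequency bin. Then the full feature map is invariant under the combined perturbation: |dft(N(m(fun n => λ • R.mulVec (x(n+t)))))(r)| = |dft(N(m(x)))(r)|, where real signals are regarded as complex-valued via coercion. -/

import Mathlib

open scoped BigOperators
open Matrix

/-- Discrete Fourier transform of a signal `z : ZMod T → ℂ`:
`dft z r = ∑ n, z n · exp(−2πi·r·n/T)` with canonical representatives. -/
noncomputable def dft {T : ℕ} [NeZero T] (z : ZMod T → ℂ) (r : ZMod T) : ℂ :=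
  ∑ n : ZMod T,
    z n * Complex.exp (-(2 * Real.pi * Complex.I * (r.val : ℂ) * (n.val : ℂ)) / (T : ℂ))

/-- The ℓ² norm `‖z‖₂ = √(∑ n, z n²)`. -/
noncomputable def l2norm {T : ℕ} [NeZero T] (z : ZMod T → ℝ) : ℝ :=
  Real.sqrt (∑ n : ZMod T, (z n) ^ 2)

/-- Normalization `N(z) = z / ‖z‖₂` for `z ≠ 0`, and `N(0) = 0`. -/
noncomputable def nmlz {T : ℕ} [NeZero T] (z : ZMod T → ℝ) : ZMod T → ℝ :=
  if z = 0 then 0 else fun n => z n / l2norm z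

/-- Axis-to-magnitude pooling: `pool x n = √(∑ i, x n i ²)`. -/
noncomputable def pool {T : ℕ} (x : ZMod T → Fin 3 → ℝ) : ZMod T → ℝ :=
  fun n => Real.sqrt (∑ i : Fin 3, (x n i) ^ 2)

/-!
An orthogonal matrix preserves the Euclidean norm of every sample, so pooling turns the
perturbed signal into `λ` times a circular shift of `m(x)`. Normalization removes the positive
gain and commutes with the shift, and a circular shift by `t` multiplies the `r`-th DFT
coefficient by the unit-modulus character value `e^{2πi t r / T}`.
-/

namespace ZMod

variable {N : ℕ} [NeZero N] {E : Type*} [NormedAddCommGroup E] [NormedSpace ℂ E]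

lemma dft_comp_add_right (Φ : ZMod N → E) (t k : ZMod N) :
    𝓕 (fun j ↦ Φ (j + t)) k = stdAddChar (t * k) • 𝓕 Φ k := by
  simp only [dft_apply, Finset.smul_sum, smul_smul]
  refine Fintype.sum_equiv (Equiv.addRight t) _ _ fun j ↦ ?_
  rw [Equiv.coe_addRight, ← AddChar.map_add_eq_mul]
  congr 2
  ring

lemma norm_dft_comp_add_right (Φ : ZMod N → E) (t k : ZMod N) :
    ‖𝓕 (fun j ↦ Φ (j + t)) k‖ = ‖𝓕 Φ k‖ := by
  rw [dft_comp_add_right, norm_smul, stdAddChar_apply, Circle.norm_coe, one_mul]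

end ZMod

lemma dft_eq_zmod_dft {T : ℕ} [NeZero T] (z : ZMod T → ℂ) : dft z = ZMod.dft z := by
  ext r
  refine Finset.sum_congr rfl fun n _ ↦ ?_
  have hcast : (((-(n.val * r.val : ℕ) : ℤ)) : ZMod T) = -(n * r) := by
    push_cast
    rw [ZMod.natCast_zmod_val, ZMod.natCast_zmod_val]
  rw [smul_eq_mul, mul_comm, ← hcast, ZMod.stdAddChar_coe]
  congr 2
  push_cast
  ring

lemma sum_sq_mulVec_of_transpose_mul_self {ι : Type*} [Fintype ι] [DecidableEq ι]
    {R : Matrix ι ι ℝ} (hR : Rᵀ * R = 1) (v : ι → ℝ) :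
    ∑ i, (R *ᵥ v) i ^ 2 = ∑ i, v i ^ 2 := by
  simp only [sq]
  change (R *ᵥ v) ⬝ᵥ (R *ᵥ v) = v ⬝ᵥ v
  rw [dotProduct_mulVec, ← mulVec_transpose, mulVec_mulVec, hR, one_mulVec]

lemma pool_smul_mulVec {T : ℕ} (x : ZMod T → Fin 3 → ℝ) {R : Matrix (Fin 3) (Fin 3) ℝ}
    (hR : Rᵀ * R = 1) (c : ℝ) :
    pool (fun k ↦ c • R *ᵥ x k) = |c| • pool x := by
  funext n
  have hsum : ∑ i, ((c • R *ᵥ x n) i) ^ 2 = c ^ 2 * ∑ i, (x n i) ^ 2 := by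
    simp only [Pi.smul_apply, smul_eq_mul, mul_pow, ← Finset.mul_sum,
      sum_sq_mulVec_of_transpose_mul_self hR]
  change √(∑ i, ((c • R *ᵥ x n) i) ^ 2) = |c| * √(∑ i, (x n i) ^ 2)
  rw [hsum, Real.sqrt_mul (sq_nonneg c), Real.sqrt_sq_eq_abs]

section Normalization

variable {T : ℕ} [NeZero T]

lemma l2norm_smul (c : ℝ) (z : ZMod T → ℝ) : l2norm (c • z) = |c| * l2norm z := by
  simp only [l2norm, Pi.smul_apply, smul_eq_mul, mul_pow, ← Finset.mul_sum,
    Real.sqrt_mul (sq_nonneg c), Real.sqrt_sq_eq_abs]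

lemma nmlz_smul {c : ℝ} (hc : 0 < c) (z : ZMod T → ℝ) : nmlz (c • z) = nmlz z := by
  unfold nmlz
  by_cases hz : z = 0
  · simp [hz]
  · rw [if_neg (smul_ne_zero hc.ne' hz), if_neg hz, l2norm_smul, abs_of_pos hc]
    funext n
    rw [Pi.smul_apply, smul_eq_mul, mul_div_mul_left _ _ hc.ne']

lemma l2norm_comp_add_right (z : ZMod T → ℝ) (t : ZMod T) :
    l2norm (fun n ↦ z (n + t)) = l2norm z := by
  unfold l2norm
  congr 1
  exact Fintype.sum_equiv (Equiv.addRight t) _ _ fun _ ↦ rfl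

lemma nmlz_comp_add_right (z : ZMod T → ℝ) (t : ZMod T) :
    nmlz (fun n ↦ z (n + t)) = fun n ↦ nmlz z (n + t) := by
  have hzero : (fun n ↦ z (n + t)) = 0 ↔ z = 0 := by
    refine ⟨fun h ↦ funext fun m ↦ ?_, fun h ↦ by simp [h, Pi.zero_def]⟩
    simpa using congrFun h (m - t)
  unfold nmlz
  by_cases hz : z = 0
  · simp [hz, Pi.zero_def]
  · rw [if_neg (hzero.not.mpr hz), if_neg hz, l2norm_comp_add_right]

end Normalization

/-- The full feature map (pool, normalize, DFT magnitudes) is invariant under the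
combined perturbation of an orthogonal rotation, a positive gain, and a circular
time shift. -/
theorem full_feature_invariance {T : ℕ} [NeZero T] (x : ZMod T → Fin 3 → ℝ)
    (R : Matrix (Fin 3) (Fin 3) ℝ) (hR : Rᵀ * R = 1)
    {l : ℝ} (hl : 0 < l) (t r : ZMod T) :
    ‖(dft (fun n => ((nmlz (pool (fun k => l • R.mulVec (x (k + t)))) n : ℝ) : ℂ)) r)‖
    = ‖dft (fun n => ((nmlz (pool x) n : ℝ) : ℂ)) r‖ := by
  have hpool : pool (fun k ↦ l • R *ᵥ x (k + t)) = l • fun n ↦ pool x (n + t) := by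
    rw [pool_smul_mulVec (fun k ↦ x (k + t)) hR, abs_of_pos hl]
    rfl
  rw [hpool, nmlz_smul hl, nmlz_comp_add_right, dft_eq_zmod_dft, dft_eq_zmod_dft]
  exact ZMod.norm_dft_comp_add_right (fun n ↦ ((nmlz (pool x) n : ℝ) : ℂ)) t r
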